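/- After three Lüders measurements of randomly chosen Yu–Oh projectors on a Yu–Oh state, exactly 265 distinct rays can occur: the set S₃ is finite and has cardinality 265. -/

import Mathlib

/-!
Each measurement sends a line `ℂ ∙ w` either to the line of the Yu–Oh vector `vᵢ` (when
`⟪vᵢ, w⟫ ≠ 0`) or to the line of the rejection `⟪vᵢ, vᵢ⟫ w - ⟪vᵢ, w⟫ vᵢ` (when it is nonzero).
Starting from integer vectors, both outcomes are integer vectors again, so every `Sₙ` is the set of
lines of an explicitly computable finite list of integer vectors. Two nonzero integer vectors span
the same complex line iff their cross product vanishes, so the list can be pruned to one vector per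
line; for `n = 3` the kernel evaluates it to 265 pairwise non-parallel vectors.
-/

open scoped InnerProductSpace

noncomputable def v : Fin 13 → EuclideanSpace ℂ (Fin 3) :=
  ![!₂[1, 0, 0], !₂[0, 1, 0], !₂[0, 0, 1],
    !₂[0, 1, -1], !₂[0, 1, 1], !₂[1, 0, -1], !₂[1, 0, 1], !₂[1, -1, 0], !₂[1, 1, 0],
    !₂[1, 1, 1], !₂[-1, 1, 1], !₂[1, -1, 1], !₂[1, 1, -1]]

noncomputable def P (i : Fin 13) (w : EuclideanSpace ℂ (Fin 3)) : EuclideanSpace ℂ (Fin 3) :=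
  ((Submodule.span ℂ {v i}).orthogonalProjectionOnto w : EuclideanSpace ℂ (Fin 3))

noncomputable def S : ℕ → Set (Submodule ℂ (EuclideanSpace ℂ (Fin 3)))
  | 0 => {L | ∃ i : Fin 13, L = Submodule.span ℂ {v i}}
  | (n + 1) => {L | ∃ L' ∈ S n, ∃ w ∈ L', w ≠ 0 ∧ ∃ i : Fin 13,
      (P i w ≠ 0 ∧ L = Submodule.span ℂ {P i w}) ∨
      (w - P i w ≠ 0 ∧ L = Submodule.span ℂ {w - P i w})}

section LuedersMeasurement

variable {𝕜 E ι : Type*} [RCLike 𝕜] [NormedAddCommGroup E] [InnerProductSpace 𝕜 E] {u w : E}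

theorem starProjection_span_singleton_eq_zero_iff (hu : u ≠ 0) :
    (𝕜 ∙ u).starProjection w = 0 ↔ ⟪u, w⟫_𝕜 = 0 := by
  simp [Submodule.starProjection_singleton, hu]

theorem span_starProjection_span_singleton (h : ⟪u, w⟫_𝕜 ≠ 0) :
    (𝕜 ∙ (𝕜 ∙ u).starProjection w) = 𝕜 ∙ u := by
  have hu : u ≠ 0 := by rintro rfl; simp at h
  rw [Submodule.starProjection_singleton]
  exact Submodule.span_singleton_smul_eq (IsUnit.mk0 _ (div_ne_zero h (by simpa using hu))) u

theorem sub_starProjection_span_singleton (hu : u ≠ 0) :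
    w - (𝕜 ∙ u).starProjection w = (⟪u, u⟫_𝕜)⁻¹ • (⟪u, u⟫_𝕜 • w - ⟪u, w⟫_𝕜 • u) := by
  have hu' : ⟪u, u⟫_𝕜 ≠ 0 := inner_self_ne_zero.mpr hu
  rw [Submodule.starProjection_singleton, RCLike.ofReal_pow, ← inner_self_eq_norm_sq_to_K,
    smul_sub, smul_smul, inv_mul_cancel₀ hu', one_smul, smul_smul, div_eq_inv_mul]

theorem sub_starProjection_span_singleton_ne_zero_iff (hu : u ≠ 0) :
    w - (𝕜 ∙ u).starProjection w ≠ 0 ↔ ⟪u, u⟫_𝕜 • w - ⟪u, w⟫_𝕜 • u ≠ 0 := by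
  rw [sub_starProjection_span_singleton hu,
    smul_ne_zero_iff_right (inv_ne_zero (inner_self_ne_zero.mpr hu))]

theorem span_sub_starProjection_span_singleton (hu : u ≠ 0) :
    (𝕜 ∙ (w - (𝕜 ∙ u).starProjection w)) = 𝕜 ∙ (⟪u, u⟫_𝕜 • w - ⟪u, w⟫_𝕜 • u) := by
  rw [sub_starProjection_span_singleton hu]
  exact Submodule.span_singleton_smul_eq (IsUnit.mk0 _ (inv_ne_zero (inner_self_ne_zero.mpr hu))) _

variable (𝕜) in
def measuredLines (u : ι → E) (w : E) : Set (Submodule 𝕜 E) :=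
  {L | ∃ i, ((𝕜 ∙ u i).starProjection w ≠ 0 ∧ L = 𝕜 ∙ (𝕜 ∙ u i).starProjection w) ∨
    (w - (𝕜 ∙ u i).starProjection w ≠ 0 ∧ L = 𝕜 ∙ (w - (𝕜 ∙ u i).starProjection w))}

variable (𝕜) in
def measurementStep (u : ι → E) (𝓛 : Set (Submodule 𝕜 E)) : Set (Submodule 𝕜 E) :=
  {L | ∃ L' ∈ 𝓛, ∃ w ∈ L', w ≠ 0 ∧ L ∈ measuredLines 𝕜 u w}

variable (𝕜) in
/-- The outcome of the complementary projection is rescaled by `⟪u i, u i⟫` so that it stays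
integral when `u i` and `w` are. -/
def measurementOutcomes (u : ι → E) (w : E) : Set E :=
  {y | ∃ i, (⟪u i, w⟫_𝕜 ≠ 0 ∧ y = u i) ∨
    (y ≠ 0 ∧ y = ⟪u i, u i⟫_𝕜 • w - ⟪u i, w⟫_𝕜 • u i)}

theorem measuredLines_smul (u : ι → E) {c : 𝕜} (hc : c ≠ 0) (w : E) :
    measuredLines 𝕜 u (c • w) = measuredLines 𝕜 u w := by
  have hspan (x : E) : (𝕜 ∙ c • x) = 𝕜 ∙ x :=
    Submodule.span_singleton_smul_eq (IsUnit.mk0 c hc) x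
  simp only [measuredLines, map_smul, ← smul_sub, smul_ne_zero_iff_right hc, hspan]

theorem measuredLines_eq_image (u : ι → E) (hu : ∀ i, u i ≠ 0) (w : E) :
    measuredLines 𝕜 u w = (fun y ↦ 𝕜 ∙ y) '' measurementOutcomes 𝕜 u w := by
  ext L
  simp only [measuredLines, measurementOutcomes, Set.mem_image, Set.mem_ofPred_eq]
  constructor
  · rintro ⟨i, ⟨hP, rfl⟩ | ⟨hQ, rfl⟩⟩
    · have h : ⟪u i, w⟫_𝕜 ≠ 0 := by rwa [Ne, ← starProjection_span_singleton_eq_zero_iff (hu i)]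
      exact ⟨u i, ⟨i, .inl ⟨h, rfl⟩⟩, (span_starProjection_span_singleton h).symm⟩
    · exact ⟨_, ⟨i, .inr ⟨(sub_starProjection_span_singleton_ne_zero_iff (hu i)).mp hQ, rfl⟩⟩,
        (span_sub_starProjection_span_singleton (hu i)).symm⟩
  · rintro ⟨y, ⟨i, ⟨h, rfl⟩ | ⟨hy, rfl⟩⟩, rfl⟩
    · exact ⟨i, .inl ⟨(starProjection_span_singleton_eq_zero_iff (hu i)).not.mpr h,
        (span_starProjection_span_singleton h).symm⟩⟩
    · exact ⟨i, .inr ⟨(sub_starProjection_span_singleton_ne_zero_iff (hu i)).mpr hy,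
        (span_sub_starProjection_span_singleton (hu i)).symm⟩⟩

theorem measurementStep_image_span (u : ι → E) (hu : ∀ i, u i ≠ 0) {X : Set E} (hX : 0 ∉ X) :
    measurementStep 𝕜 u ((fun x ↦ 𝕜 ∙ x) '' X) =
      (fun y ↦ 𝕜 ∙ y) '' ⋃ x ∈ X, measurementOutcomes 𝕜 u x := by
  ext L
  simp only [measurementStep, Set.mem_ofPred_eq, Set.exists_mem_image, Set.image_iUnion₂,
    Set.mem_iUnion₂, ← measuredLines_eq_image u hu]
  constructor
  · rintro ⟨x, hx, w, hw, hw0, hL⟩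
    obtain ⟨c, rfl⟩ := Submodule.mem_span_singleton.mp hw
    have hc : c ≠ 0 := by rintro rfl; simp at hw0
    exact ⟨x, hx, measuredLines_smul u hc x ▸ hL⟩
  · rintro ⟨x, hx, hL⟩
    exact ⟨x, hx, x, Submodule.mem_span_singleton_self x, fun h ↦ hX (h ▸ hx), hL⟩

end LuedersMeasurement

abbrev ZVec := ℤ × ℤ × ℤ

namespace ZVec

def toComplex (q : ZVec) : EuclideanSpace ℂ (Fin 3) := !₂[q.1, q.2.1, q.2.2]

def dot (a b : ZVec) : ℤ := a.1 * b.1 + a.2.1 * b.2.1 + a.2.2 * b.2.2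

def rejection (u q : ZVec) : ZVec := dot u u • q - dot u q • u

/-- The cross product of `a` and `b` vanishes. -/
def Parallel (a b : ZVec) : Prop :=
  a.2.1 * b.2.2 = a.2.2 * b.2.1 ∧ a.2.2 * b.1 = a.1 * b.2.2 ∧ a.1 * b.2.1 = a.2.1 * b.1

instance : DecidableRel Parallel := fun _ _ ↦ instDecidableAnd

theorem toComplex_eq_zero_iff {q : ZVec} : q.toComplex = 0 ↔ q = 0 := by
  obtain ⟨a, b, c⟩ := q
  simp [toComplex, Prod.ext_iff, ← List.ofFn_inj]

theorem inner_toComplex (a b : ZVec) : ⟪a.toComplex, b.toComplex⟫_ℂ = dot a b := by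
  simp [toComplex, dot, PiLp.inner_apply, Fin.sum_univ_three]
  ring

theorem toComplex_rejection (u q : ZVec) :
    (rejection u q).toComplex =
      ⟪u.toComplex, u.toComplex⟫_ℂ • q.toComplex - ⟪u.toComplex, q.toComplex⟫_ℂ • u.toComplex := by
  rw [inner_toComplex, inner_toComplex]
  ext j
  fin_cases j <;> simp [rejection, toComplex]

theorem Parallel.symm {a b : ZVec} (h : Parallel a b) : Parallel b a := by
  obtain ⟨h₁, h₂, h₃⟩ := h
  exact ⟨by linear_combination -h₁, by linear_combination -h₂, by linear_combination -h₃⟩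

theorem parallel_refl (a : ZVec) : Parallel a a := ⟨mul_comm _ _, mul_comm _ _, mul_comm _ _⟩

theorem toComplex_mem_span_iff {a b : ZVec} (ha : a ≠ 0) :
    b.toComplex ∈ ℂ ∙ a.toComplex ↔ Parallel a b := by
  obtain ⟨a₁, a₂, a₃⟩ := a
  obtain ⟨b₁, b₂, b₃⟩ := b
  have hx : ![(a₁ : ℂ), a₂, a₃] ≠ 0 := by
    simpa [Prod.ext_iff, ← List.ofFn_inj] using ha
  have key : (∃ c : ℂ, c • ![(a₁ : ℂ), a₂, a₃] = ![(b₁ : ℂ), b₂, b₃]) ↔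
      crossProduct ![(a₁ : ℂ), a₂, a₃] ![(b₁ : ℂ), b₂, b₃] = 0 := by
    rw [← not_iff_not, not_exists, ← Ne, crossProduct_ne_zero_iff_linearIndependent,
      LinearIndependent.pair_iff' hx]
  rw [Submodule.mem_span_singleton]
  simp only [toComplex, ← WithLp.toLp_smul, (WithLp.toLp_injective 2).eq_iff]
  rw [key, cross_apply]
  simp [Parallel, sub_eq_zero, ← Int.cast_mul, Int.cast_inj]

def line (q : ZVec) : Submodule ℂ (EuclideanSpace ℂ (Fin 3)) := ℂ ∙ q.toComplex

theorem line_eq_line_iff {a b : ZVec} (ha : a ≠ 0) (hb : b ≠ 0) :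
    a.line = b.line ↔ Parallel a b := by
  refine ⟨fun h ↦ (toComplex_mem_span_iff ha).mp ?_, fun h ↦ le_antisymm ?_ ?_⟩
  · exact (show b.toComplex ∈ a.line from h ▸ Submodule.mem_span_singleton_self _)
  · exact (Submodule.span_singleton_le_iff_mem _ _).mpr ((toComplex_mem_span_iff hb).mpr h.symm)
  · exact (Submodule.span_singleton_le_iff_mem _ _).mpr ((toComplex_mem_span_iff ha).mpr h)

def insertRay (q : ZVec) (l : List ZVec) : List ZVec :=
  if ∃ p ∈ l, Parallel p q then l else q :: l

/-- Pruning by cross-product tests instead of reducing to a normal form (gcd and sign) keeps the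
kernel evaluation in `YuOh.length_rays_three` cheap. -/
def reduceRays (l : List ZVec) : List ZVec := l.foldr insertRay []

theorem reduceRays_subset (l : List ZVec) : reduceRays l ⊆ l := by
  induction l with
  | nil => exact List.Subset.refl _
  | cons q l ih =>
    simp only [reduceRays, List.foldr_cons, insertRay]
    split_ifs
    · exact List.Subset.trans ih (List.subset_cons_self q l)
    · exact List.cons_subset_cons q ih

theorem pairwise_reduceRays (l : List ZVec) :
    (reduceRays l).Pairwise fun a b ↦ ¬Parallel a b := by
  induction l with
  | nil => exact List.Pairwise.nil
  | cons q l ih =>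
    simp only [reduceRays, List.foldr_cons, insertRay]
    split_ifs with h
    · exact ih
    · push Not at h
      exact List.Pairwise.cons (fun p hp hqp ↦ h p hp hqp.symm) ih

theorem image_line_reduceRays {l : List ZVec} (hl : ∀ q ∈ l, q ≠ 0) :
    line '' {q | q ∈ reduceRays l} = line '' {q | q ∈ l} := by
  induction l with
  | nil => rfl
  | cons q l ih =>
    have hq := hl q List.mem_cons_self
    rw [List.setOfPred_mem_cons, Set.image_insert_eq,
      ← ih fun p hp ↦ hl p (List.mem_cons_of_mem q hp)]
    simp only [reduceRays, List.foldr_cons, insertRay]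
    split_ifs with h
    · obtain ⟨p, hp, hpq⟩ := h
      have hp0 := hl p (List.mem_cons_of_mem q (reduceRays_subset l hp))
      rw [← (line_eq_line_iff hp0 hq).mpr hpq]
      exact (Set.insert_eq_of_mem (Set.mem_image_of_mem line hp)).symm
    · rw [List.setOfPred_mem_cons, Set.image_insert_eq]

theorem injOn_line_reduceRays {l : List ZVec} (hl : ∀ q ∈ l, q ≠ 0) :
    Set.InjOn line {q | q ∈ reduceRays l} := by
  intro a ha b hb hab
  by_contra hne
  have : Std.Symm fun a b : ZVec ↦ ¬Parallel a b := ⟨fun _ _ h h' ↦ h h'.symm⟩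
  exact (pairwise_reduceRays l).forall ha hb hne
    ((line_eq_line_iff (hl a (reduceRays_subset l ha)) (hl b (reduceRays_subset l hb))).mp hab)

theorem ncard_image_line_reduceRays {l : List ZVec} (hl : ∀ q ∈ l, q ≠ 0) :
    (line '' {q | q ∈ reduceRays l}).ncard = (reduceRays l).length := by
  have hnodup : (reduceRays l).Nodup :=
    (pairwise_reduceRays l).imp fun h ↦ by rintro rfl; exact h (parallel_refl _)
  rw [(injOn_line_reduceRays hl).ncard_image, ← List.coe_toFinset, Set.ncard_coe_finset,
    List.toFinset_card_of_nodup hnodup]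

end ZVec

namespace YuOh

open ZVec

def vInt : Fin 13 → ZVec :=
  ![(1, 0, 0), (0, 1, 0), (0, 0, 1),
    (0, 1, -1), (0, 1, 1), (1, 0, -1), (1, 0, 1), (1, -1, 0), (1, 1, 0),
    (1, 1, 1), (-1, 1, 1), (1, -1, 1), (1, 1, -1)]

theorem toComplex_vInt (i : Fin 13) : (vInt i).toComplex = v i := by
  fin_cases i <;> ext j <;> fin_cases j <;> simp [vInt, v, toComplex]

theorem vInt_ne_zero (i : Fin 13) : vInt i ≠ 0 := by
  fin_cases i <;> decide

def outcomes (q : ZVec) : List ZVec :=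
  (List.finRange 13).flatMap fun i ↦
    (if dot (vInt i) q = 0 then [] else [vInt i]) ++
      (if rejection (vInt i) q = 0 then [] else [rejection (vInt i) q])

theorem ne_zero_of_mem_outcomes {q y : ZVec} (hy : y ∈ outcomes q) : y ≠ 0 := by
  simp only [outcomes, List.mem_flatMap, List.mem_append] at hy
  obtain ⟨i, -, hy | hy⟩ := hy <;> split_ifs at hy with h <;> simp_all [vInt_ne_zero]

theorem ne_zero_of_mem_flatMap_outcomes {l : List ZVec} {q : ZVec}
    (hq : q ∈ l.flatMap outcomes) : q ≠ 0 := by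
  obtain ⟨p, -, hqp⟩ := List.mem_flatMap.mp hq
  exact ne_zero_of_mem_outcomes hqp

theorem image_toComplex_outcomes (q : ZVec) :
    toComplex '' {y | y ∈ outcomes q} = measurementOutcomes ℂ v q.toComplex := by
  ext y
  simp only [outcomes, measurementOutcomes, Set.mem_image, Set.mem_ofPred_eq, List.mem_flatMap,
    List.mem_finRange, true_and, List.mem_append, ← toComplex_vInt, ← toComplex_rejection]
  simp only [inner_toComplex, ne_eq, Int.cast_eq_zero]
  constructor
  · rintro ⟨x, ⟨i, hx | hx⟩, rfl⟩ <;> refine ⟨i, ?_⟩ <;> split_ifs at hx with h <;>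
      simp only [List.mem_singleton, List.not_mem_nil] at hx <;> subst hx
    · exact .inl ⟨h, rfl⟩
    · exact .inr ⟨toComplex_eq_zero_iff.not.mpr h, rfl⟩
  · rintro ⟨i, ⟨h, rfl⟩ | ⟨h, rfl⟩⟩
    · exact ⟨vInt i, ⟨i, .inl (by simp [h])⟩, rfl⟩
    · exact ⟨_, ⟨i, .inr (by simp [toComplex_eq_zero_iff.not.mp h])⟩, rfl⟩

def rays : ℕ → List ZVec
  | 0 => List.ofFn vInt
  | n + 1 => reduceRays ((rays n).flatMap outcomes)

theorem ne_zero_of_mem_rays {n : ℕ} {q : ZVec} (hq : q ∈ rays n) : q ≠ 0 := by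
  cases n with
  | zero =>
    obtain ⟨i, rfl⟩ := List.mem_ofFn.mp hq
    exact vInt_ne_zero i
  | succ n => exact ne_zero_of_mem_flatMap_outcomes (reduceRays_subset _ hq)

theorem P_eq_starProjection (i : Fin 13) (w : EuclideanSpace ℂ (Fin 3)) :
    P i w = (ℂ ∙ v i).starProjection w :=
  Submodule.coe_orthogonalProjectionOnto_apply _ _

theorem S_succ (n : ℕ) : S (n + 1) = measurementStep ℂ v (S n) := by
  simp only [S, measurementStep, measuredLines, P_eq_starProjection, Set.mem_ofPred_eq]

theorem v_ne_zero (i : Fin 13) : v i ≠ 0 := by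
  rw [← toComplex_vInt, Ne, toComplex_eq_zero_iff]
  exact vInt_ne_zero i

theorem S_eq_image_line_rays (n : ℕ) : S n = line '' {q | q ∈ rays n} := by
  induction n with
  | zero =>
    ext L
    simp only [S, rays, Set.mem_image, Set.mem_ofPred_eq, List.mem_ofFn, line]
    constructor
    · rintro ⟨i, rfl⟩
      exact ⟨vInt i, ⟨i, rfl⟩, by rw [toComplex_vInt]⟩
    · rintro ⟨_, ⟨i, rfl⟩, rfl⟩
      exact ⟨i, by rw [toComplex_vInt]⟩
  | succ n ih =>
    have h0 : (0 : EuclideanSpace ℂ (Fin 3)) ∉ toComplex '' {q | q ∈ rays n} := by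
      rintro ⟨q, hq, h⟩
      exact ne_zero_of_mem_rays hq (toComplex_eq_zero_iff.mp h)
    have hline : line = (fun x ↦ ℂ ∙ x) ∘ toComplex := rfl
    have hflat : ⋃ q ∈ {q | q ∈ rays n}, {y | y ∈ outcomes q} =
        {y | y ∈ (rays n).flatMap outcomes} := by
      ext y
      simp [List.mem_flatMap]
    calc S (n + 1)
        = (fun x ↦ ℂ ∙ x) '' ⋃ q ∈ {q | q ∈ rays n}, measurementOutcomes ℂ v q.toComplex := by
          rw [S_succ, ih, hline, Set.image_comp, measurementStep_image_span v v_ne_zero h0,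
            Set.biUnion_image]
      _ = line '' {q | q ∈ (rays n).flatMap outcomes} := by
          simp only [← image_toComplex_outcomes, ← Set.image_iUnion₂, hflat, hline, Set.image_comp]
      _ = line '' {q | q ∈ rays (n + 1)} :=
          (image_line_reduceRays fun _ ↦ ne_zero_of_mem_flatMap_outcomes).symm

theorem ncard_image_line_rays (n : ℕ) :
    (line '' {q | q ∈ rays (n + 1)}).ncard = (rays (n + 1)).length :=
  ncard_image_line_reduceRays fun _ ↦ ne_zero_of_mem_flatMap_outcomes

set_option maxRecDepth 100000 in
theorem length_rays_three : (rays 3).length = 265 := by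
  decide +kernel

end YuOh

theorem S3_card : (S 3).Finite ∧ (S 3).ncard = 265 := by
  rw [YuOh.S_eq_image_line_rays]
  exact ⟨(List.finite_toSet _).image _,
    (YuOh.ncard_image_line_rays 2).trans YuOh.length_rays_three⟩
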